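/- arXiv:quant-ph/0310191 — 5 statements merged into one kernel-verified Lean document; each statement's English description precedes it below -/
import Mathlib

section
/- Let γ ≥ 1 and let w₁, w₂, …, w_{2γ+1} be positive integers; set l = w₁ + w₃ + ⋯ + w_{2γ+1} and m = w₂ + w₄ + ⋯ + w_{2γ}. Then the alternating matrix product P^{w₁} Q^{w₂} P^{w₃} ⋯ Q^{w_{2γ}} P^{w_{2γ+1}} equals a^{l−(γ+1)} · b^γ · c^γ · d^{m−γ} · P. -/
/-!
`P² = a P`, `Q² = d Q` and `P Q P = (b c) P`, so every power `P^(k+1)`, `Q^(k+1)` is a scalar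
multiple of `P`, `Q`, and each block `P^u Q^v` in front of a `P` collapses onto a multiple of `P`.
Peeling blocks off the front therefore leaves one factor `a` and one `d` per exponent beyond the
first of each block, and one `b c` per `Q`-block.
-/

open scoped BigOperators

/-- The matrix `P = [[a, b], [0, 0]]`. -/
noncomputable def Pmat (a b : ℝ) : Matrix (Fin 2) (Fin 2) ℝ := !![a, b; 0, 0]
/-- The matrix `Q = [[0, 0], [c, d]]`. -/
noncomputable def Qmat (c d : ℝ) : Matrix (Fin 2) (Fin 2) ℝ := !![0, 0; c, d]
/-- The matrix `R = [[c, d], [0, 0]]`. -/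
noncomputable def Rmat (c d : ℝ) : Matrix (Fin 2) (Fin 2) ℝ := !![c, d; 0, 0]
/-- The matrix `S = [[0, 0], [a, b]]`. -/
noncomputable def Smat (a b : ℝ) : Matrix (Fin 2) (Fin 2) ℝ := !![0, 0; a, b]

open Finset

section ParitySums

variable {M : Type*} [AddCommMonoid M]

theorem sum_even_fin_succ_succ {n : ℕ} (w : Fin (n + 2) → M) :
    ∑ i ∈ univ.filter (fun i : Fin (n + 2) => (i : ℕ) % 2 = 0), w i =
      w 0 + ∑ i ∈ univ.filter (fun i : Fin n => (i : ℕ) % 2 = 0), w i.succ.succ := by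
  simp [sum_filter, Fin.sum_univ_succ, add_assoc]

theorem sum_odd_fin_succ_succ {n : ℕ} (w : Fin (n + 2) → M) :
    ∑ i ∈ univ.filter (fun i : Fin (n + 2) => (i : ℕ) % 2 = 1), w i =
      w 1 + ∑ i ∈ univ.filter (fun i : Fin n => (i : ℕ) % 2 = 1), w i.succ.succ := by
  simp [sum_filter, Fin.sum_univ_succ, add_assoc]

theorem succ_le_sum_even {n : ℕ} (w : Fin (2 * n + 1) → ℕ) (hw : ∀ i, 0 < w i) :
    n + 1 ≤ ∑ i ∈ univ.filter (fun i : Fin (2 * n + 1) => (i : ℕ) % 2 = 0), w i := by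
  induction n with
  | zero => simpa [sum_filter, Nat.one_le_iff_ne_zero] using (hw 0).ne'
  | succ n ih =>
    -- `2 * (n + 1) + 1` and `2 * n + 1 + 2` agree only up to unfolding, hence `erw`
    erw [sum_even_fin_succ_succ (n := 2 * n + 1) w]
    have := ih (fun i => w i.succ.succ) fun i => hw _
    have := hw 0
    omega

theorem le_sum_odd {n : ℕ} (w : Fin (2 * n + 1) → ℕ) (hw : ∀ i, 0 < w i) :
    n ≤ ∑ i ∈ univ.filter (fun i : Fin (2 * n + 1) => (i : ℕ) % 2 = 1), w i := by
  induction n with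
  | zero => exact Nat.zero_le _
  | succ n ih =>
    erw [sum_odd_fin_succ_succ (n := 2 * n + 1) w]
    have := ih (fun i => w i.succ.succ) fun i => hw _
    have := hw 1
    omega

end ParitySums

section ScalarIdempotent

variable {R A : Type*} [CommSemiring R] [Semiring A] [Module R A] [IsScalarTower R A A]

theorem pow_succ_eq_smul_of_mul_self_eq_smul {p : A} {a : R} (hp : p * p = a • p) (k : ℕ) :
    p ^ (k + 1) = a ^ k • p := by
  induction k with
  | zero => simp
  | succ k ih => rw [pow_succ, ih, smul_mul_assoc, hp, smul_smul, pow_succ]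

theorem pow_succ_mul_pow_succ_mul_eq_smul [SMulCommClass R A A] {p q : A} {a d e : R}
    (hp : p * p = a • p) (hq : q * q = d • q) (hpqp : p * q * p = e • p) (u v : ℕ) :
    p ^ (u + 1) * q ^ (v + 1) * p = (a ^ u * d ^ v * e) • p := by
  rw [pow_succ_eq_smul_of_mul_self_eq_smul hp, pow_succ_eq_smul_of_mul_self_eq_smul hq,
    smul_mul_smul_comm, smul_mul_assoc, hpqp, smul_smul]

theorem prod_ofFn_alternating_pow [SMulCommClass R A A] {p q : A} {a d e : R}
    (hp : p * p = a • p) (hq : q * q = d • q) (hpqp : p * q * p = e • p) (n : ℕ)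
    (w : Fin (2 * n + 1) → ℕ) (hw : ∀ i, 0 < w i) :
    (List.ofFn (fun i : Fin (2 * n + 1) => (if (i : ℕ) % 2 = 0 then p else q) ^ (w i))).prod =
      (a ^ (∑ i ∈ univ.filter (fun i : Fin (2 * n + 1) => (i : ℕ) % 2 = 0), w i - (n + 1)) *
        e ^ n * d ^ (∑ i ∈ univ.filter (fun i : Fin (2 * n + 1) => (i : ℕ) % 2 = 1), w i - n)) •
        p := by
  induction n with
  | zero =>
    obtain ⟨k, hk⟩ := Nat.exists_eq_add_one_of_ne_zero (hw 0).ne'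
    simp [hk, pow_succ_eq_smul_of_mul_self_eq_smul hp]
  | succ n ih =>
    let w' : Fin (2 * n + 1) → ℕ := fun i => w i.succ.succ
    have hE := succ_le_sum_even w' fun i => hw _
    have hO := le_sum_odd w' fun i => hw _
    obtain ⟨u, hu⟩ := Nat.exists_eq_add_one_of_ne_zero (hw 0).ne'
    obtain ⟨v, hv⟩ := Nat.exists_eq_add_one_of_ne_zero (hw 1).ne'
    erw [List.ofFn_succ, List.ofFn_succ, sum_even_fin_succ_succ (n := 2 * n + 1) w,
      sum_odd_fin_succ_succ (n := 2 * n + 1) w]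
    simp only [List.prod_cons, Fin.val_succ, add_assoc, one_add_one_eq_two, Nat.add_mod_right]
    erw [ih w' fun i => hw _]
    simp only [Fin.val_zero, Fin.succ_zero_eq_one, Nat.zero_mod, zero_add, Nat.one_mod,
      one_ne_zero, if_true, if_false]
    rw [mul_smul_comm, mul_smul_comm, ← mul_assoc, hu, hv,
      pow_succ_mul_pow_succ_mul_eq_smul hp hq hpqp, smul_smul]
    obtain ⟨s, hs⟩ := Nat.exists_eq_add_of_le hE
    obtain ⟨t, ht⟩ := Nat.exists_eq_add_of_le hO
    erw [hs, ht]
    rw [Nat.add_sub_cancel_left, Nat.add_sub_cancel_left,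
      show u + 1 + (n + 1 + s) - (n + 2) = s + u by omega,
      show v + 1 + (n + t) - (n + 1) = t + v by omega]
    congr 1
    ring

end ScalarIdempotent

theorem Pmat_mul_self (a b : ℝ) : Pmat a b * Pmat a b = a • Pmat a b := by
  ext i j
  fin_cases i <;> fin_cases j <;> simp [Pmat, Matrix.mul_apply, mul_comm]

theorem Qmat_mul_self (c d : ℝ) : Qmat c d * Qmat c d = d • Qmat c d := by
  ext i j
  fin_cases i <;> fin_cases j <;> simp [Qmat, Matrix.mul_apply, mul_comm]

theorem Pmat_mul_Qmat_mul_Pmat (a b c d : ℝ) :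
    Pmat a b * Qmat c d * Pmat a b = (b * c) • Pmat a b := by
  ext i j
  fin_cases i <;> fin_cases j <;> simp [Pmat, Qmat, Matrix.mul_apply, mul_comm]

theorem alternating_product_general (a d b c : ℝ)
    (γ : ℕ) (w : Fin (2 * γ + 1) → ℕ) (hw : ∀ i, 0 < w i)
    (l m : ℕ)
    (hl : l = ∑ i ∈ Finset.univ.filter (fun i : Fin (2 * γ + 1) => (i : ℕ) % 2 = 0), w i)
    (hm : m = ∑ i ∈ Finset.univ.filter (fun i : Fin (2 * γ + 1) => (i : ℕ) % 2 = 1), w i) :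
    (List.ofFn (fun i : Fin (2 * γ + 1) =>
        (if (i : ℕ) % 2 = 0 then Pmat a b else Qmat c d) ^ (w i))).prod =
      (a ^ (l - (γ + 1)) * b ^ γ * c ^ γ * d ^ (m - γ)) • Pmat a b := by
  rw [hl, hm, prod_ofFn_alternating_pow (Pmat_mul_self a b) (Qmat_mul_self c d)
    (Pmat_mul_Qmat_mul_Pmat a b c d) γ w hw, mul_pow, ← mul_assoc]

/-- For `γ ≥ 1` and positive integers `w₁, …, w_{2γ+1}` with
`l = w₁ + w₃ + ⋯ + w_{2γ+1}` and `m = w₂ + w₄ + ⋯ + w_{2γ}`, the alternating product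
`P^{w₁} Q^{w₂} P^{w₃} ⋯ Q^{w_{2γ}} P^{w_{2γ+1}}` equals
`a^{l−(γ+1)} b^γ c^γ d^{m−γ} P`.  (Positions are 1-based in the informal statement, so the
odd 1-based positions are the even `Fin` indices.) -/
theorem alternating_product (a d b c : ℝ) (ha : 0 < a) (ha1 : a < 1) (hd : 0 < d)
    (hd1 : d < 1) (hb : b = 1 - d) (hc : c = 1 - a) (hΔ : a * d - b * c ≠ 0)
    (γ : ℕ) (hγ : 1 ≤ γ) (w : Fin (2 * γ + 1) → ℕ) (hw : ∀ i, 0 < w i)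
    (l m : ℕ)
    (hl : l = ∑ i ∈ Finset.univ.filter (fun i : Fin (2 * γ + 1) => (i : ℕ) % 2 = 0), w i)
    (hm : m = ∑ i ∈ Finset.univ.filter (fun i : Fin (2 * γ + 1) => (i : ℕ) % 2 = 1), w i) :
    (List.ofFn (fun i : Fin (2 * γ + 1) =>
        (if (i : ℕ) % 2 = 0 then Pmat a b else Qmat c d) ^ (w i))).prod =
      (a ^ (l - (γ + 1)) * b ^ γ * c ^ γ * d ^ (m - γ)) • Pmat a b :=
  alternating_product_general a d b c γ w hw l m hl hm
end

section
/- For integers l ≥ 2 and m ≥ 1, write Ξ(l,m) = p(l,m)·P + q(l,m)·Q + r(l,m)·R + s(l,m)·S (this expansion is unique since {P, Q, R, S} is a basis of M₂(ℝ) when ad − bc ≠ 0). Then p(l,m) = Σ_{γ=1}^{min(l−1, m)} C(l−1, γ) · C(m−1, γ−1) · a^{l−(γ+1)} · b^γ · c^γ · d^{m−γ}, where C denotes the binomial coefficient. -/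
open scoped BigOperators

/-- `Xi Pm Qm l m` is the sum, over all words of length `l + m` in the letters `Pm`, `Qm`
containing exactly `l` letters `Pm` and `m` letters `Qm`, of the ordered matrix product of the
letters of the word (a word is encoded as `w : Fin (l+m) → Bool`, `true` standing for `Pm`). -/
noncomputable def Xi (Pm Qm : Matrix (Fin 2) (Fin 2) ℝ) (l m : ℕ) :
    Matrix (Fin 2) (Fin 2) ℝ :=
  ∑ w ∈ Finset.univ.filter
      (fun w : Fin (l + m) → Bool => (Finset.univ.filter (fun i => w i = true)).card = l),
    (List.ofFn (fun i => if w i = true then Pm else Qm)).prod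

section Aux

noncomputable def XiAux (Pm Qm : Matrix (Fin 2) (Fin 2) ℝ) (n k : ℕ) :
    Matrix (Fin 2) (Fin 2) ℝ :=
  ∑ w ∈ Finset.univ.filter
      (fun w : Fin n → Bool => (Finset.univ.filter (fun i => w i = true)).card = k),
    (List.ofFn (fun i => if w i = true then Pm else Qm)).prod

lemma card_cons (n : ℕ) (b : Bool) (v : Fin n → Bool) :
    (Finset.univ.filter (fun i => (Fin.cons b v : Fin (n+1) → Bool) i = true)).card
      = (cond b 1 0) + (Finset.univ.filter (fun i => v i = true)).card := by
  rw [Finset.card_filter, Finset.card_filter, Fin.sum_univ_succ]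
  simp only [Fin.cons_zero, Fin.cons_succ]
  cases b <;> simp

lemma XiAux_split (Pm Qm : Matrix (Fin 2) (Fin 2) ℝ) (n k : ℕ) :
    XiAux Pm Qm (n+1) k =
      (if 1 ≤ k then Pm * XiAux Pm Qm n (k-1) else 0) + Qm * XiAux Pm Qm n k := by
  conv_lhs =>
    unfold XiAux
    rw [Finset.sum_filter]
    rw [← (Fin.consEquiv (fun _ : Fin (n+1) => Bool)).sum_comp
      (fun w => if (Finset.univ.filter (fun i => w i = true)).card = k
        then (List.ofFn (fun i => if w i = true then Pm else Qm)).prod else 0)]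
    rw [Fintype.sum_prod_type, Fintype.sum_bool]
  have hprod : ∀ (b : Bool) (v : Fin n → Bool),
      (List.ofFn (fun i => if (Fin.consEquiv (fun _ : Fin (n+1) => Bool)) (b, v) i = true
        then Pm else Qm)).prod
      = (if b then Pm else Qm) * (List.ofFn (fun i => if v i = true then Pm else Qm)).prod := by
    intro b v
    rw [List.ofFn_succ]
    simp [Fin.consEquiv, Fin.cons_zero, Fin.cons_succ]
  have hcard : ∀ (b : Bool) (v : Fin n → Bool),
      (Finset.univ.filter
        (fun i => (Fin.consEquiv (fun _ : Fin (n+1) => Bool)) (b, v) i = true)).card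
      = (cond b 1 0) + (Finset.univ.filter (fun i => v i = true)).card :=
    fun b v => card_cons n b v
  simp only [hprod, hcard, cond_true, cond_false, if_true, if_false]
  congr 1
  · cases k with
    | zero => simp
    | succ j =>
      rw [if_pos (Nat.succ_le_succ (Nat.zero_le j)), Nat.succ_sub_one]
      unfold XiAux
      rw [Finset.sum_filter, Finset.mul_sum]
      apply Finset.sum_congr rfl
      intro v _
      have h2 : (1 + (Finset.univ.filter (fun i => v i = true)).card = j + 1)
          ↔ ((Finset.univ.filter (fun i => v i = true)).card = j) := by omega
      simp [h2]
  · unfold XiAux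
    rw [Finset.sum_filter, Finset.mul_sum]
    apply Finset.sum_congr rfl
    intro v _
    simp

lemma XiAux_vanish (Pm Qm : Matrix (Fin 2) (Fin 2) ℝ) (n k : ℕ) (h : n < k) :
    XiAux Pm Qm n k = 0 := by
  unfold XiAux
  have he : (Finset.univ.filter
      (fun w : Fin n → Bool => (Finset.univ.filter (fun i => w i = true)).card = k)) = ∅ := by
    rw [Finset.filter_eq_empty_iff]
    intro w _
    have := Finset.card_filter_le (Finset.univ : Finset (Fin n)) (fun i => w i = true)
    simp only [Finset.card_univ, Fintype.card_fin] at this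
    omega
  rw [he, Finset.sum_empty]

lemma XiAux_zero : XiAux Pm Qm 0 0 = 1 := by
  simp [XiAux, List.ofFn_zero]

lemma XiAux_pow_Q (Pm Qm : Matrix (Fin 2) (Fin 2) ℝ) (n : ℕ) :
    XiAux Pm Qm n 0 = Qm ^ n := by
  induction n with
  | zero => simpa using XiAux_zero
  | succ n ih =>
    rw [XiAux_split, if_neg (by omega), ih, zero_add, pow_succ']

lemma XiAux_pow_P (Pm Qm : Matrix (Fin 2) (Fin 2) ℝ) (n : ℕ) :
    XiAux Pm Qm n n = Pm ^ n := by
  induction n with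
  | zero => simpa using XiAux_zero
  | succ n ih =>
    rw [XiAux_split, if_pos (by omega), Nat.succ_sub_one, ih,
      XiAux_vanish Pm Qm n (n+1) (by omega), mul_zero, add_zero, pow_succ']

lemma Xi_eq_XiAux (Pm Qm : Matrix (Fin 2) (Fin 2) ℝ) (l m : ℕ) :
    Xi Pm Qm l m = XiAux Pm Qm (l+m) l := rfl

lemma Xi_rec (Pm Qm : Matrix (Fin 2) (Fin 2) ℝ) (L M : ℕ) :
    Xi Pm Qm (L+1) (M+1) = Pm * Xi Pm Qm L (M+1) + Qm * Xi Pm Qm (L+1) M := by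
  rw [Xi_eq_XiAux, Xi_eq_XiAux, Xi_eq_XiAux]
  have h1 : (L+1) + (M+1) = ((L+1)+M) + 1 := rfl
  rw [h1, XiAux_split, if_pos (by omega), Nat.succ_sub_one,
    show (L+1)+M = L+(M+1) by omega]

noncomputable def pCo (a b c d : ℝ) (l m : ℕ) : ℝ :=
  ∑ j ∈ Finset.range (l + m),
    (Nat.choose (l-1) (j+1) : ℝ) * (Nat.choose (m-1) j : ℝ)
      * a ^ (l-(j+2)) * b ^ (j+1) * c ^ (j+1) * d ^ (m-(j+1))

noncomputable def qCo (a b c d : ℝ) (l m : ℕ) : ℝ :=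
  ∑ j ∈ Finset.range (l + m),
    (Nat.choose (l-1) j : ℝ) * (Nat.choose (m-1) (j+1) : ℝ)
      * a ^ (l-(j+1)) * b ^ (j+1) * c ^ (j+1) * d ^ (m-(j+2))

noncomputable def rCo (a b c d : ℝ) (l m : ℕ) : ℝ :=
  ∑ j ∈ Finset.range (l + m),
    (Nat.choose (l-1) j : ℝ) * (Nat.choose (m-1) j : ℝ)
      * a ^ (l-(j+1)) * b ^ (j+1) * c ^ j * d ^ (m-(j+1))

noncomputable def sCo (a b c d : ℝ) (l m : ℕ) : ℝ :=
  ∑ j ∈ Finset.range (l + m),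
    (Nat.choose (l-1) j : ℝ) * (Nat.choose (m-1) j : ℝ)
      * a ^ (l-(j+1)) * b ^ j * c ^ (j+1) * d ^ (m-(j+1))

lemma qCo_symm (a b c d : ℝ) (l m : ℕ) : qCo a b c d l m = pCo d c b a m l := by
  unfold qCo pCo
  rw [show m + l = l + m by omega]
  apply Finset.sum_congr rfl
  intro j _
  ring

lemma rCo_symm (a b c d : ℝ) (l m : ℕ) : rCo a b c d l m = sCo d c b a m l := by
  unfold rCo sCo
  rw [show m + l = l + m by omega]
  apply Finset.sum_congr rfl
  intro j _
  ring

lemma R1 (a b c d : ℝ) (L m : ℕ) :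
    pCo a b c d (L+2) m = a * pCo a b c d (L+1) m + b * sCo a b c d (L+1) m := by
  unfold pCo sCo
  simp only [show (L+2)-1 = L+1 from rfl, show (L+1)-1 = L from rfl]
  rw [Finset.mul_sum, Finset.mul_sum, ← Finset.sum_add_distrib,
    show (L+2)+m = ((L+1)+m)+1 by omega, Finset.sum_range_succ,
    Nat.choose_eq_zero_of_lt (show m-1 < (L+1)+m by omega)]
  push_cast
  rw [mul_zero, zero_mul, zero_mul, zero_mul, zero_mul, add_zero]
  apply Finset.sum_congr rfl
  intro j _
  rw [Nat.choose_succ_succ L j]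
  by_cases hc : j + 1 ≤ L
  · rw [show L - j = (L-(j+1))+1 by omega]
    push_cast [Nat.succ_eq_add_one]
    ring
  · rw [Nat.choose_eq_zero_of_lt (show L < j+1 by omega)]
    push_cast
    ring

lemma R4 (a b c d : ℝ) (l M : ℕ) :
    sCo a b c d l (M+2) = c * pCo a b c d l (M+1) + d * sCo a b c d l (M+1) := by
  unfold sCo pCo
  simp only [show (M+2)-1 = M+1 from rfl, show (M+1)-1 = M from rfl]
  rw [Finset.mul_sum, Finset.mul_sum,
    show l+(M+2) = (l+(M+1))+1 by omega, Finset.sum_range_succ']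
  set F : ℕ → ℝ := fun i =>
    d * (↑((l - 1).choose i) * ↑(M.choose i) * a ^ (l - (i + 1)) * b ^ i * c ^ (i + 1)
      * d ^ (M + 1 - (i + 1))) with hFdef
  have hF : ∑ i ∈ Finset.range (l + (M + 1)), F i
      = ∑ i ∈ Finset.range (l + (M + 1)), F (i + 1) + F 0 := by
    rw [← Finset.sum_range_succ' F (l + (M + 1)), Finset.sum_range_succ, hFdef]
    simp only
    rw [Nat.choose_eq_zero_of_lt (show M < l + (M + 1) by omega)]
    norm_num
  rw [hF]
  have hkey : ∀ k ∈ Finset.range (l + (M + 1)),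
      (↑((l - 1).choose (k + 1)) * ↑((M + 1).choose (k + 1)) * a ^ (l - (k + 1 + 1)) * b ^ (k + 1)
        * c ^ (k + 1 + 1) * d ^ (M + 2 - (k + 1 + 1)) : ℝ)
      = c * (↑((l - 1).choose (k + 1)) * ↑(M.choose k) * a ^ (l - (k + 2)) * b ^ (k + 1)
          * c ^ (k + 1) * d ^ (M + 1 - (k + 1))) + F (k + 1) := by
    intro k _
    simp only [hFdef, show (k:ℕ)+1+1 = k+2 from rfl]
    rw [Nat.choose_succ_succ M k]
    by_cases hc : k + 1 ≤ M
    · rw [show M+2-(k+2) = (M-(k+1))+1 by omega, show M+1-(k+1) = (M-(k+1))+1 by omega,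
        show M+1-(k+2) = M-(k+1) by omega]
      push_cast
      ring
    · rw [Nat.choose_eq_zero_of_lt (show M < k+1 by omega),
        show M+2-(k+2) = M-k by omega, show M+1-(k+1) = M-k by omega]
      push_cast
      ring
  have h1 := Finset.sum_congr rfl hkey
  rw [Finset.sum_add_distrib] at h1
  have h0 : (↑((l - 1).choose 0) * ↑((M + 1).choose 0) * a ^ (l - (0 + 1)) * b ^ 0
      * c ^ (0 + 1) * d ^ (M + 2 - (0 + 1)) : ℝ) = F 0 := by
    simp only [hFdef, show (M:ℕ)+2-(0+1) = (M+1-(0+1))+1 from rfl, Nat.choose_zero_right]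
    push_cast
    ring
  linarith [h1, h0]

lemma R2 (a b c d : ℝ) (L m : ℕ) :
    rCo a b c d (L+2) m = b * qCo a b c d (L+1) m + a * rCo a b c d (L+1) m := by
  rw [rCo_symm a b c d (L+2) m, R4 d c b a m L, ← qCo_symm, ← rCo_symm]

lemma R3 (a b c d : ℝ) (l M : ℕ) :
    qCo a b c d l (M+2) = d * qCo a b c d l (M+1) + c * rCo a b c d l (M+1) := by
  rw [qCo_symm a b c d l (M+2), R1 d c b a M l, ← qCo_symm, ← rCo_symm]

lemma pCo_one (a b c d : ℝ) (m : ℕ) : pCo a b c d 1 m = 0 := by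
  unfold pCo
  apply Finset.sum_eq_zero
  intro j _
  norm_num [Nat.choose_zero_succ]

lemma qCo_one (a b c d : ℝ) (l : ℕ) : qCo a b c d l 1 = 0 := by
  unfold qCo
  apply Finset.sum_eq_zero
  intro j _
  norm_num [Nat.choose_zero_succ]

lemma rCo_one (a b c d : ℝ) (M : ℕ) : rCo a b c d 1 (M+1) = b * d ^ M := by
  unfold rCo
  rw [Finset.sum_eq_single 0]
  · norm_num
  · intro j _ hj
    obtain ⟨i, rfl⟩ := Nat.exists_eq_succ_of_ne_zero hj
    norm_num [Nat.choose_zero_succ]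
  · intro h
    exact absurd (Finset.mem_range.mpr (by omega)) h

lemma sCo_one (a b c d : ℝ) (L : ℕ) : sCo a b c d (L+1) 1 = c * a ^ L := by
  unfold sCo
  rw [Finset.sum_eq_single 0]
  · norm_num
    ring
  · intro j _ hj
    obtain ⟨i, rfl⟩ := Nat.exists_eq_succ_of_ne_zero hj
    norm_num [Nat.choose_zero_succ]
  · intro h
    exact absurd (Finset.mem_range.mpr (by omega)) h

variable (a b c d : ℝ)


lemma mulPP : Pmat a b * Pmat a b = a • Pmat a b := by
  ext i j; fin_cases i <;> fin_cases j <;>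
    simp [Pmat, Matrix.mul_apply, Fin.sum_univ_two] <;> ring

lemma mulPQ : Pmat a b * Qmat c d = b • Rmat c d := by
  ext i j; fin_cases i <;> fin_cases j <;>
    simp [Pmat, Qmat, Rmat, Matrix.mul_apply, Fin.sum_univ_two] <;> ring

lemma mulPR : Pmat a b * Rmat c d = a • Rmat c d := by
  ext i j; fin_cases i <;> fin_cases j <;>
    simp [Pmat, Rmat, Matrix.mul_apply, Fin.sum_univ_two] <;> ring

lemma mulPS : Pmat a b * Smat a b = b • Pmat a b := by
  ext i j; fin_cases i <;> fin_cases j <;>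
    simp [Pmat, Smat, Matrix.mul_apply, Fin.sum_univ_two] <;> ring

lemma mulQP : Qmat c d * Pmat a b = c • Smat a b := by
  ext i j; fin_cases i <;> fin_cases j <;>
    simp [Pmat, Qmat, Smat, Matrix.mul_apply, Fin.sum_univ_two] <;> ring

lemma mulQQ : Qmat c d * Qmat c d = d • Qmat c d := by
  ext i j; fin_cases i <;> fin_cases j <;>
    simp [Qmat, Matrix.mul_apply, Fin.sum_univ_two] <;> ring

lemma mulQR : Qmat c d * Rmat c d = c • Qmat c d := by
  ext i j; fin_cases i <;> fin_cases j <;>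
    simp [Qmat, Rmat, Matrix.mul_apply, Fin.sum_univ_two] <;> ring

lemma mulQS : Qmat c d * Smat a b = d • Smat a b := by
  ext i j; fin_cases i <;> fin_cases j <;>
    simp [Qmat, Smat, Matrix.mul_apply, Fin.sum_univ_two] <;> ring

lemma powP (n : ℕ) : Pmat a b ^ (n+1) = a ^ n • Pmat a b := by
  induction n with
  | zero => simp
  | succ n ih =>
    rw [pow_succ, ih, Matrix.smul_mul, mulPP, smul_smul, pow_succ]

lemma powQ (n : ℕ) : Qmat c d ^ (n+1) = d ^ n • Qmat c d := by
  induction n with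
  | zero => simp
  | succ n ih =>
    rw [pow_succ, ih, Matrix.smul_mul, mulQQ, smul_smul, pow_succ]

lemma Xi_expansion (a b c d : ℝ) : ∀ n l m : ℕ, l + m = n → 1 ≤ l → 1 ≤ m →
    Xi (Pmat a b) (Qmat c d) l m
      = pCo a b c d l m • Pmat a b + qCo a b c d l m • Qmat c d
        + rCo a b c d l m • Rmat c d + sCo a b c d l m • Smat a b := by
  intro n
  induction n using Nat.strong_induction_on with
  | _ n ih =>
    intro l m hn hl hm
    obtain ⟨L, rfl⟩ : ∃ L, l = L + 1 := ⟨l - 1, by omega⟩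
    obtain ⟨M, rfl⟩ : ∃ M, m = M + 1 := ⟨m - 1, by omega⟩
    rw [Xi_rec]
    have hP : Pmat a b * Xi (Pmat a b) (Qmat c d) L (M+1)
        = pCo a b c d (L+1) (M+1) • Pmat a b + rCo a b c d (L+1) (M+1) • Rmat c d := by
      cases L with
      | zero =>
        rw [Xi_eq_XiAux, show (0:ℕ)+(M+1) = M+1 by omega, XiAux_pow_Q, powQ,
          Matrix.mul_smul, mulPQ, smul_smul, pCo_one, rCo_one, zero_smul, zero_add,
          mul_comm (d ^ M) b]
      | succ K =>
        rw [ih ((K+1)+(M+1)) (by omega) (K+1) (M+1) rfl (by omega) (by omega)]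
        rw [Matrix.mul_add, Matrix.mul_add, Matrix.mul_add,
          Matrix.mul_smul, Matrix.mul_smul, Matrix.mul_smul, Matrix.mul_smul,
          mulPP, mulPQ, mulPR, mulPS, R1 a b c d K (M+1), R2 a b c d K (M+1)]
        rw [smul_smul, smul_smul, smul_smul, smul_smul]
        module
    have hQ : Qmat c d * Xi (Pmat a b) (Qmat c d) (L+1) M
        = qCo a b c d (L+1) (M+1) • Qmat c d + sCo a b c d (L+1) (M+1) • Smat a b := by
      cases M with
      | zero =>
        rw [Xi_eq_XiAux, show (L+1)+(0:ℕ) = L+1 by omega, XiAux_pow_P, powP,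
          Matrix.mul_smul, mulQP, smul_smul, qCo_one, sCo_one, zero_smul, zero_add,
          mul_comm (a ^ L) c]
      | succ K =>
        rw [ih ((L+1)+(K+1)) (by omega) (L+1) (K+1) rfl (by omega) (by omega)]
        rw [Matrix.mul_add, Matrix.mul_add, Matrix.mul_add,
          Matrix.mul_smul, Matrix.mul_smul, Matrix.mul_smul, Matrix.mul_smul,
          mulQP, mulQQ, mulQR, mulQS, R3 a b c d (L+1) K, R4 a b c d (L+1) K]
        rw [smul_smul, smul_smul, smul_smul, smul_smul]
        module
    rw [hP, hQ]
    module

end Aux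

/-- For `l ≥ 2`, `m ≥ 1`, in the (unique) expansion
`Ξ(l,m) = p(l,m) P + q(l,m) Q + r(l,m) R + s(l,m) S` one has
`p(l,m) = Σ_{γ=1}^{min(l−1,m)} C(l−1,γ) C(m−1,γ−1) a^{l−(γ+1)} b^γ c^γ d^{m−γ}`. -/

theorem p_coefficient (a d b c : ℝ) (ha : 0 < a) (ha1 : a < 1) (hd : 0 < d) (hd1 : d < 1)
    (hb : b = 1 - d) (hc : c = 1 - a) (hΔ : a * d - b * c ≠ 0)
    (l m : ℕ) (hl : 2 ≤ l) (hm : 1 ≤ m) :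
    ∀ p q r s : ℝ,
      Xi (Pmat a b) (Qmat c d) l m =
          p • Pmat a b + q • Qmat c d + r • Rmat c d + s • Smat a b →
      p = ∑ γ ∈ Finset.Icc 1 (min (l - 1) m),
            (Nat.choose (l - 1) γ : ℝ) * (Nat.choose (m - 1) (γ - 1) : ℝ)
              * a ^ (l - (γ + 1)) * b ^ γ * c ^ γ * d ^ (m - γ) := by
  intro p q r s hexp2
  have hexp := Xi_expansion a b c d (l+m) l m rfl (by omega) hm
  rw [hexp2] at hexp
  have e1 := congrFun (congrFun hexp 0) 0
  have e2 := congrFun (congrFun hexp 0) 1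
  simp [Pmat, Qmat, Rmat, Smat, Matrix.add_apply, Matrix.smul_apply] at e1 e2
  have key : p = pCo a b c d l m := by
    have h3 : (p - pCo a b c d l m) * (a * d - b * c) = 0 := by
      linear_combination d * e1 - c * e2
    rcases mul_eq_zero.mp h3 with h | h
    · linarith [sub_eq_zero.mp h]
    · exact absurd h hΔ
  rw [key]
  unfold pCo
  have step1 : ∑ γ ∈ Finset.Icc 1 (min (l-1) m),
      ((Nat.choose (l-1) γ : ℝ) * (Nat.choose (m-1) (γ-1) : ℝ)
        * a ^ (l-(γ+1)) * b ^ γ * c ^ γ * d ^ (m-γ))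
      = ∑ γ ∈ Finset.Icc 1 (l+m),
      ((Nat.choose (l-1) γ : ℝ) * (Nat.choose (m-1) (γ-1) : ℝ)
        * a ^ (l-(γ+1)) * b ^ γ * c ^ γ * d ^ (m-γ)) := by
    apply Finset.sum_subset (Finset.Icc_subset_Icc le_rfl (by omega))
    intro x hx hnx
    simp only [Finset.mem_Icc] at hx hnx
    have hx2 : l - 1 < x ∨ m < x := by omega
    rcases hx2 with h | h
    · rw [Nat.choose_eq_zero_of_lt h]
      push_cast
      ring
    · rw [Nat.choose_eq_zero_of_lt (show m-1 < x-1 by omega)]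
      push_cast
      ring
  rw [step1, ← Finset.Ico_add_one_right_eq_Icc, Finset.sum_Ico_eq_sum_range]
  apply Finset.sum_congr (by norm_num)
  intro j hj
  simp only [Nat.add_comm 1 j, Nat.add_sub_cancel, show (j:ℕ)+1+1 = j+2 from rfl]
end

section
/- Fix θ ∈ (0,1) and x ∈ (0, 1/2). For each n ≥ 1 let aₙ = 1 − θ/n and zₙ = (1 − aₙ)²/aₙ². Let (kₙ) be a sequence of integers with 1 ≤ kₙ ≤ n − 1 and kₙ/n → x as n → ∞. Then Σ_{γ=1}^{kₙ} zₙ^{γ−1} · C(kₙ−1, γ−1) · C(n−kₙ−1, γ−1) converges as n → ∞ to I₀(2θ√(x(1−x))), where C denotes the binomial coefficient. (This sum equals the terminating hypergeometric value ₂F₁(−(kₙ−1), −(n−kₙ−1); 1; zₙ).) -/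
open scoped BigOperators

/-- The modified Bessel function `I₀(z) = Σ_{n=0}^∞ (z/2)^{2n}/(n!)²`. -/
noncomputable def besselI0 (z : ℝ) : ℝ :=
  ∑' n : ℕ, (z / 2) ^ (2 * n) / ((Nat.factorial n : ℝ)) ^ 2

open Filter Topology Finset
open scoped Nat

/-! Since `C(a, m) = ∏_{i<m} (a - i) / m!`, the `m`-th term of the sum is
`∏_{i<m} zₙ (kₙ - 1 - i)(n - kₙ - 1 - i) / m!²`. As `n²zₙ → θ²`, each factor tends to `θ²x(1 - x)`
and is eventually bounded by `θ² + 1`, so Tannery's theorem gives the limit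
`Σ_m (θ²x(1 - x))^m / m!² = I₀(2θ√(x(1 - x)))`. -/

theorem summable_pow_div_factorial_sq (x : ℝ) :
    Summable fun m : ℕ => x ^ m / (m ! : ℝ) ^ 2 := by
  refine (Real.summable_pow_div_factorial |x|).of_norm_bounded fun m => ?_
  have hm : (1 : ℝ) ≤ m ! := mod_cast m.factorial_pos
  rw [norm_div, norm_pow, Real.norm_eq_abs, norm_pow, Real.norm_natCast]
  gcongr
  nlinarith

theorem besselI0_two_mul (y : ℝ) :
    besselI0 (2 * y) = ∑' m : ℕ, (y ^ 2) ^ m / (m ! : ℝ) ^ 2 := by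
  simp only [besselI0, pow_mul, mul_div_cancel_left₀ y two_ne_zero]

theorem tendsto_tsum_prod_div_factorial_sq {α : Type*} {l : Filter α} {f : α → ℕ → ℝ}
    {L C : ℝ} (hf : ∀ i, Tendsto (f · i) l (𝓝 L)) (hC : ∀ᶠ a in l, ∀ i, ‖f a i‖ ≤ C) :
    Tendsto (fun a => ∑' m : ℕ, (∏ i ∈ range m, f a i) / (m ! : ℝ) ^ 2) l
      (𝓝 (∑' m : ℕ, L ^ m / (m ! : ℝ) ^ 2)) := by
  refine tendsto_tsum_of_dominated_convergence (summable_pow_div_factorial_sq C)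
    (fun m => ?_) ?_
  · simpa only [prod_const, card_range] using
      (tendsto_finsetProd (range m) fun i _ => hf i).div_const _
  · filter_upwards [hC] with a ha m
    rw [norm_div, norm_prod, norm_pow, Real.norm_natCast]
    gcongr
    calc ∏ i ∈ range m, ‖f a i‖ ≤ ∏ _i ∈ range m, C :=
          prod_le_prod (fun i _ => norm_nonneg _) fun i _ => ha i
      _ = C ^ m := by rw [prod_const, card_range]

theorem cast_choose_eq_prod_div_factorial (a m : ℕ) :
    (a.choose m : ℝ) = (∏ i ∈ range m, ((a - i : ℕ) : ℝ)) / m ! := by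
  rw [eq_div_iff (mod_cast m.factorial_ne_zero), ← Nat.cast_prod,
    ← Nat.descFactorial_eq_prod_range, Nat.descFactorial_eq_factorial_mul_choose]
  push_cast
  ring

theorem pow_mul_choose_mul_choose (z : ℝ) (a b m : ℕ) :
    z ^ m * a.choose m * b.choose m
      = (∏ i ∈ range m, z * ((a - i : ℕ) : ℝ) * ((b - i : ℕ) : ℝ)) / (m ! : ℝ) ^ 2 := by
  rw [cast_choose_eq_prod_div_factorial, cast_choose_eq_prod_div_factorial,
    prod_mul_distrib, prod_mul_distrib, prod_const, card_range]
  ring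

theorem sum_Icc_pow_mul_choose_mul_choose {K : ℕ} (hK : 1 ≤ K) (z : ℝ) (b : ℕ) :
    ∑ γ ∈ Icc 1 K, z ^ (γ - 1) * ((K - 1).choose (γ - 1) : ℝ) * (b.choose (γ - 1) : ℝ)
      = ∑' m : ℕ, z ^ m * ((K - 1).choose m : ℝ) * (b.choose m : ℝ) := by
  rw [tsum_eq_sum (s := range K) fun m hm => ?_]
  · rw [← Ico_add_one_right_eq_Icc, sum_Ico_eq_sum_range]
    simp only [Nat.add_sub_cancel, Nat.add_sub_cancel_left]
  · rw [Nat.choose_eq_zero_of_lt (by simp at hm; omega)]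
    simp

theorem tendsto_natCast_sub_div {a : ℕ → ℕ} {x : ℝ}
    (ha : Tendsto (fun n : ℕ => (a n : ℝ) / n) atTop (𝓝 x)) (j : ℕ) :
    Tendsto (fun n : ℕ => ((a n - j : ℕ) : ℝ) / n) atTop (𝓝 x) := by
  have hlow : Tendsto (fun n : ℕ => (a n : ℝ) / n - j / n) atTop (𝓝 x) := by
    simpa using ha.sub (tendsto_const_div_atTop_nhds_zero_nat (j : ℝ))
  refine tendsto_of_tendsto_of_tendsto_of_le_of_le hlow ha (fun n => ?_) fun n => ?_
  · rw [← sub_div]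
    gcongr
    rw [sub_le_iff_le_add, ← Nat.cast_add]
    exact Nat.cast_le.mpr le_tsub_add
  · gcongr
    exact_mod_cast Nat.sub_le _ _

theorem tendsto_natCast_self_sub_div {k : ℕ → ℕ} {x : ℝ} (hk : ∀ᶠ n in atTop, k n ≤ n)
    (hkx : Tendsto (fun n : ℕ => (k n : ℝ) / n) atTop (𝓝 x)) :
    Tendsto (fun n : ℕ => ((n - k n : ℕ) : ℝ) / n) atTop (𝓝 (1 - x)) := by
  refine (tendsto_const_nhds.sub hkx).congr' ?_
  filter_upwards [hk, eventually_ne_atTop 0] with n hn hn0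
  rw [Nat.cast_sub hn]
  field_simp

theorem tendsto_sq_div_one_sub_div_sq_mul_sq (θ : ℝ) :
    Tendsto (fun n : ℕ => (1 - (1 - θ / n)) ^ 2 / (1 - θ / n) ^ 2 * n ^ 2) atTop (𝓝 (θ ^ 2)) := by
  have h : Tendsto (fun n : ℕ => θ ^ 2 / (1 - θ / n) ^ 2) atTop (𝓝 (θ ^ 2 / (1 - 0) ^ 2)) :=
    tendsto_const_nhds.div
      ((tendsto_const_nhds.sub (tendsto_const_div_atTop_nhds_zero_nat θ)).pow 2) (by norm_num)
  refine Tendsto.congr' ?_ (by simpa using h)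
  filter_upwards [eventually_ne_atTop 0] with n hn
  rw [sub_sub_cancel]
  field_simp

theorem tendsto_tsum_pow_mul_choose_mul_choose {w : ℕ → ℝ} {a b : ℕ → ℕ} {c x y : ℝ}
    (hw0 : ∀ n, 0 ≤ w n) (hw : Tendsto (fun n : ℕ => w n * n ^ 2) atTop (𝓝 c))
    (ha : Tendsto (fun n : ℕ => (a n : ℝ) / n) atTop (𝓝 x))
    (hb : Tendsto (fun n : ℕ => (b n : ℝ) / n) atTop (𝓝 y))
    (ha_le : ∀ᶠ n in atTop, a n ≤ n) (hb_le : ∀ᶠ n in atTop, b n ≤ n) :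
    Tendsto (fun n => ∑' m : ℕ, w n ^ m * ((a n).choose m : ℝ) * ((b n).choose m : ℝ)) atTop
      (𝓝 (∑' m : ℕ, (c * (x * y)) ^ m / (m ! : ℝ) ^ 2)) := by
  have hf (i : ℕ) : Tendsto (fun n : ℕ => w n * ((a n - i : ℕ) : ℝ) * ((b n - i : ℕ) : ℝ))
      atTop (𝓝 (c * (x * y))) := by
    rw [← mul_assoc]
    refine ((hw.mul (tendsto_natCast_sub_div ha i)).mul
      (tendsto_natCast_sub_div hb i)).congr' ?_
    filter_upwards [eventually_ne_atTop 0] with n hn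
    field_simp
  have hC : ∀ᶠ n in atTop, ∀ i : ℕ,
      ‖w n * ((a n - i : ℕ) : ℝ) * ((b n - i : ℕ) : ℝ)‖ ≤ c + 1 := by
    filter_upwards [ha_le, hb_le, hw.eventually (gt_mem_nhds (lt_add_one c))]
      with n han hbn hwn i
    have hwn0 := hw0 n
    rw [Real.norm_of_nonneg (by positivity)]
    calc w n * ((a n - i : ℕ) : ℝ) * ((b n - i : ℕ) : ℝ) ≤ w n * n * n := by
          gcongr <;> omega
      _ ≤ c + 1 := by linarith
  simp_rw [pow_mul_choose_mul_choose]
  exact tendsto_tsum_prod_div_factorial_sq hf hC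

open Filter Topology in
theorem hypergeom_limit_one_general (θ : ℝ)
    (x : ℝ) (k : ℕ → ℕ)
    (hk : ∀ n : ℕ, 2 ≤ n → 1 ≤ k n ∧ k n ≤ n - 1)
    (hkx : Tendsto (fun n : ℕ => (k n : ℝ) / n) atTop (𝓝 x)) :
    Tendsto (fun n : ℕ =>
        ∑ γ ∈ Finset.Icc 1 (k n),
          ((1 - (1 - θ / n)) ^ 2 / (1 - θ / n) ^ 2) ^ (γ - 1)
            * (Nat.choose (k n - 1) (γ - 1) : ℝ) * (Nat.choose (n - k n - 1) (γ - 1) : ℝ))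
      atTop (𝓝 (besselI0 (2 * θ * Real.sqrt (x * (1 - x))))) := by
  have hk_le : ∀ᶠ n in atTop, k n ≤ n :=
    (eventually_ge_atTop 2).mono fun n hn => (hk n hn).2.trans (Nat.sub_le n 1)
  have hx0 : 0 ≤ x := ge_of_tendsto' hkx fun n => by positivity
  have hx1 : x ≤ 1 :=
    le_of_tendsto hkx <| hk_le.mono fun n hn => div_le_one_of_le₀ (mod_cast hn) n.cast_nonneg
  have hlim := tendsto_tsum_pow_mul_choose_mul_choose (fun n => by positivity)
    (tendsto_sq_div_one_sub_div_sq_mul_sq θ) (tendsto_natCast_sub_div hkx 1)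
    (tendsto_natCast_sub_div (tendsto_natCast_self_sub_div hk_le hkx) 1)
    (hk_le.mono fun n hn => by omega) (.of_forall fun n => by omega)
  rw [mul_assoc, besselI0_two_mul, mul_pow, Real.sq_sqrt (by nlinarith)]
  refine hlim.congr' ?_
  filter_upwards [eventually_ge_atTop 2] with n hn
  rw [sum_Icc_pow_mul_choose_mul_choose (hk n hn).1]

open Filter Topology in
/-- Lemma 8 (first part): with `aₙ = 1 − θ/n`, `zₙ = (1−aₙ)²/aₙ²` and `kₙ/n → x ∈ (0,1/2)`,
`Σ_{γ=1}^{kₙ} zₙ^{γ−1} C(kₙ−1,γ−1) C(n−kₙ−1,γ−1) → I₀(2θ√(x(1−x)))` as `n → ∞`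
(the sum equals `₂F₁(−(kₙ−1), −(n−kₙ−1); 1; zₙ)`). -/
theorem hypergeom_limit_one (θ : ℝ) (hθ : 0 < θ) (hθ1 : θ < 1)
    (x : ℝ) (hx : 0 < x) (hx2 : x < 1 / 2) (k : ℕ → ℕ)
    (hk : ∀ n : ℕ, 2 ≤ n → 1 ≤ k n ∧ k n ≤ n - 1)
    (hkx : Tendsto (fun n : ℕ => (k n : ℝ) / n) atTop (𝓝 x)) :
    Tendsto (fun n : ℕ =>
        ∑ γ ∈ Finset.Icc 1 (k n),
          ((1 - (1 - θ / n)) ^ 2 / (1 - θ / n) ^ 2) ^ (γ - 1)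
            * (Nat.choose (k n - 1) (γ - 1) : ℝ) * (Nat.choose (n - k n - 1) (γ - 1) : ℝ))
      atTop (𝓝 (besselI0 (2 * θ * Real.sqrt (x * (1 - x))))) :=
  hypergeom_limit_one_general θ x k hk hkx
end

section
/- Assume a = d ∈ (0,1) (so b = c = 1 − a). Then for every integer k ≥ 1 and every initial distribution φ = (α, β), the total absorption probability at 0 on the half-line equals one: Σ_{n=1}^{∞} (1,1)·Ξ^{(∞)}_k(n)·(α,β)ᵀ = 1. -/
open scoped BigOperators

/-- Row vector `(1,1)` times a matrix times the column vector `(α, β)ᵀ`. -/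
noncomputable def entryPair (M : Matrix (Fin 2) (Fin 2) ℝ) (α β : ℝ) : ℝ :=
  (M 0 0 + M 1 0) * α + (M 0 1 + M 1 1) * β

/-- The position after `j+1` steps of the step sequence `s` started at `k`
(`s i = true` encodes the step `+1`, `s i = false` the step `−1`). -/
def walkPos (k : ℤ) {n : ℕ} (s : Fin n → Bool) (j : Fin n) : ℤ :=
  k + ∑ i ∈ Finset.univ.filter (fun i : Fin n => i ≤ j), (if s i then (1 : ℤ) else -1)

/-- `XiInf Pm Qm k n = Ξ^{(∞)}_k(n)`: the sum, over all step sequences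
`(s₁, …, sₙ) ∈ {−1,+1}ⁿ` whose partial positions `k_j = k + s₁ + ⋯ + s_j` satisfy `k_j > 0`
for `1 ≤ j ≤ n−1` and `k_n = 0`, of the matrix product `M_{sₙ} ⋯ M_{s₁}` where
`M_{−1} = Pm` and `M_{+1} = Qm`. -/
noncomputable def XiInf (Pm Qm : Matrix (Fin 2) (Fin 2) ℝ) (k : ℤ) (n : ℕ) :
    Matrix (Fin 2) (Fin 2) ℝ :=
  ∑ s ∈ Finset.univ.filter (fun s : Fin n → Bool =>
      (∀ j : Fin n, (j : ℕ) < n - 1 → 0 < walkPos k s j) ∧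
      (∀ j : Fin n, (j : ℕ) = n - 1 → walkPos k s j = 0)),
    ((List.ofFn (fun i => if s i then Qm else Pm)).reverse).prod

namespace AbsorptionAux

/-- Step size: `+1` for `true`, `-1` for `false`. -/
def stp (x : Bool) : ℤ := if x then 1 else -1

/-- First hitting of `0`: the path stays positive until its final position, which is `0`. -/
def FHb : ℤ → List Bool → Bool
  | _, [] => false
  | k, x :: l => if k + stp x = 0 then l.isEmpty else (decide (0 < k + stp x) && FHb (k + stp x) l)

/-- Scalar weight of a path given the previous direction `p`. -/
noncomputable def wt (a : ℝ) : Bool → List Bool → ℝ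
  | _, [] => 1
  | p, x :: l => (if x = p then a else 1 - a) * wt a x l

lemma FHb_cons (k : ℤ) (x : Bool) (l : List Bool) (hl : l ≠ []) :
    FHb k (x :: l) = true ↔ (0 < k + stp x ∧ FHb (k + stp x) l = true) := by
  by_cases h : k + stp x = 0
  · simp [FHb, h, List.isEmpty_iff, hl]
  · simp [FHb, h]

lemma FHb_single (k : ℤ) (x : Bool) : FHb k [x] = true ↔ k + stp x = 0 := by
  by_cases h : k + stp x = 0 <;> simp [FHb, h]

lemma walkPos_zero (k : ℤ) {n : ℕ} (s : Fin (n + 1) → Bool) :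
    walkPos k s 0 = k + stp (s 0) := by
  have h : Finset.univ.filter (fun i : Fin (n+1) => i ≤ 0) = {0} := by
    ext i; simp [Fin.le_zero_iff]
  rw [walkPos, h, Finset.sum_singleton, stp]

lemma walkPos_succ (k : ℤ) {n : ℕ} (s : Fin (n + 1) → Bool) (j : Fin n) :
    walkPos k s j.succ = walkPos (k + stp (s 0)) (fun i => s i.succ) j := by
  rw [walkPos, walkPos, Finset.sum_filter, Finset.sum_filter, Fin.sum_univ_succ]
  have h0 : ((0 : Fin (n+1)) ≤ j.succ) := Fin.zero_le _
  rw [if_pos h0, stp]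
  have : ∀ i : Fin n, (i.succ ≤ j.succ) = (i ≤ j) := fun i => by
    simp [Fin.succ_le_succ_iff]
  simp only [this]
  ring

lemma cond_iff : ∀ (n : ℕ) (k : ℤ) (s : Fin (n + 1) → Bool),
    ((∀ j : Fin (n + 1), (j : ℕ) < (n + 1) - 1 → 0 < walkPos k s j) ∧
     (∀ j : Fin (n + 1), (j : ℕ) = (n + 1) - 1 → walkPos k s j = 0))
    ↔ FHb k (List.ofFn s) = true := by
  intro n
  induction n with
  | zero =>
    intro k s
    rw [List.ofFn_succ, List.ofFn_zero, FHb_single]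
    constructor
    · rintro ⟨-, h2⟩
      have := h2 0 rfl
      rwa [walkPos_zero] at this
    · intro h
      refine ⟨fun j hj => by omega, fun j _ => ?_⟩
      have hj0 : j = 0 := Fin.ext (by omega)
      rw [hj0, walkPos_zero]; exact h
  | succ n ih =>
    intro k s
    rw [List.ofFn_succ,
      FHb_cons _ _ _ (by simp [← List.length_pos_iff_ne_nil]), ← ih]
    constructor
    · rintro ⟨h1, h2⟩
      have hpos0 : 0 < k + stp (s 0) := by
        have := h1 0 (by simp)
        rwa [walkPos_zero] at this
      refine ⟨hpos0, ⟨fun j hj => ?_, fun j hj => ?_⟩⟩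
      · have := h1 j.succ (by simp; omega)
        rwa [walkPos_succ] at this
      · have := h2 j.succ (by simp; omega)
        rwa [walkPos_succ] at this
    · rintro ⟨hpos0, h1, h2⟩
      constructor <;> intro j hj
      · induction j using Fin.cases with
        | zero => rw [walkPos_zero]; exact hpos0
        | succ i =>
          rw [walkPos_succ]
          exact h1 i (by simp at hj; omega)
      · induction j using Fin.cases with
        | zero => simp at hj
        | succ i =>
          rw [walkPos_succ]
          exact h2 i (by simp at hj; omega)

lemma entryPair_mul_P (a : ℝ) (A : Matrix (Fin 2) (Fin 2) ℝ) (α β : ℝ) :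
    entryPair (A * Pmat a (1 - a)) α β = entryPair A (a * α + (1 - a) * β) 0 := by
  simp [entryPair, Pmat, Matrix.mul_apply, Fin.sum_univ_two]; ring

lemma entryPair_mul_Q (a : ℝ) (A : Matrix (Fin 2) (Fin 2) ℝ) (α β : ℝ) :
    entryPair (A * Qmat (1 - a) a) α β = entryPair A 0 ((1 - a) * α + a * β) := by
  simp [entryPair, Qmat, Matrix.mul_apply, Fin.sum_univ_two]; ring

lemma entryPair_prod (a : ℝ) (l : List Bool) : ∀ α β : ℝ,
    entryPair (((l.map (fun x => if x then Qmat (1 - a) a else Pmat a (1 - a))).reverse).prod) α β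
      = α * wt a false l + β * wt a true l := by
  induction l with
  | nil => intro α β; simp [entryPair, wt, Matrix.one_apply]
  | cons x l ih =>
    intro α β
    rw [List.map_cons, List.reverse_cons, List.prod_append, List.prod_singleton]
    cases x
    · rw [if_neg (by simp), entryPair_mul_P, ih]
      simp [wt]; ring
    · rw [if_pos rfl, entryPair_mul_Q, ih]
      simp [wt]; ring

/-- Scalar absorption weight at exactly time `n` with previous direction `p`. -/
noncomputable def Pn (a : ℝ) (p : Bool) (k : ℤ) (n : ℕ) : ℝ :=
  ∑ s : Fin n → Bool, if FHb k (List.ofFn s) then wt a p (List.ofFn s) else 0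

/-- Total absorption weight within the first `N` steps. -/
noncomputable def Afun (a : ℝ) (p : Bool) (k : ℤ) (N : ℕ) : ℝ :=
  ∑ n ∈ Finset.range N, Pn a p k (n + 1)

lemma entryPair_sum {ι : Type*} (t : Finset ι) (f : ι → Matrix (Fin 2) (Fin 2) ℝ) (α β : ℝ) :
    entryPair (∑ x ∈ t, f x) α β = ∑ x ∈ t, entryPair (f x) α β := by
  simp [entryPair, Matrix.sum_apply, Finset.sum_mul, ← Finset.sum_add_distrib]

lemma entryPair_XiInf (a : ℝ) (k : ℤ) (n : ℕ) (α β : ℝ) :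
    entryPair (XiInf (Pmat a (1 - a)) (Qmat (1 - a) a) k (n + 1)) α β
      = α * Pn a false k (n + 1) + β * Pn a true k (n + 1) := by
  rw [XiInf, entryPair_sum, Finset.sum_filter]
  have key : ∀ s : Fin (n+1) → Bool,
      (if ((∀ j : Fin (n+1), (j:ℕ) < (n+1) - 1 → 0 < walkPos k s j) ∧
            (∀ j : Fin (n+1), (j:ℕ) = (n+1) - 1 → walkPos k s j = 0))
        then entryPair (((List.ofFn fun i =>
          if s i then Qmat (1-a) a else Pmat a (1-a)).reverse).prod) α β else 0)
      = α * (if FHb k (List.ofFn s) then wt a false (List.ofFn s) else 0)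
        + β * (if FHb k (List.ofFn s) then wt a true (List.ofFn s) else 0) := by
    intro s
    have hmap : (List.ofFn fun i => if s i then Qmat (1-a) a else Pmat a (1-a))
        = (List.ofFn s).map (fun x => if x then Qmat (1-a) a else Pmat a (1-a)) := by
      rw [List.map_ofFn]; rfl
    by_cases h : FHb k (List.ofFn s) = true
    · rw [if_pos ((cond_iff n k s).mpr h), if_pos h, if_pos h, hmap, entryPair_prod]
    · rw [if_neg (fun hc => h ((cond_iff n k s).mp hc)), if_neg h, if_neg h]; ring
  rw [Finset.sum_congr rfl fun s _ => key s, Finset.sum_add_distrib,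
    ← Finset.mul_sum, ← Finset.mul_sum, Pn, Pn]

lemma wt_nonneg {a : ℝ} (ha : 0 < a) (ha1 : a < 1) :
    ∀ (p : Bool) (l : List Bool), 0 ≤ wt a p l := by
  intro p l
  induction l generalizing p with
  | nil => exact zero_le_one
  | cons x l ih =>
    refine mul_nonneg ?_ (ih x)
    split <;> linarith

lemma Pn_nonneg {a : ℝ} (ha : 0 < a) (ha1 : a < 1) (p : Bool) (k : ℤ) (n : ℕ) :
    0 ≤ Pn a p k n := by
  refine Finset.sum_nonneg fun s _ => ?_
  split
  · exact wt_nonneg ha ha1 _ _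
  · exact le_refl 0

lemma Pn_one {a : ℝ} (k : ℤ) (hk : 1 ≤ k) (p : Bool) :
    Pn a p k 1 = if k = 1 then (if p then 1 - a else a) else 0 := by
  rw [Pn, ← Equiv.sum_comp (Equiv.funUnique (Fin 1) Bool).symm]
  rw [Fintype.sum_bool]
  have ht : List.ofFn ((Equiv.funUnique (Fin 1) Bool).symm true) = [true] := by
    simp [List.ofFn_succ]
  have hf : List.ofFn ((Equiv.funUnique (Fin 1) Bool).symm false) = [false] := by
    simp [List.ofFn_succ]
  rw [ht, hf]
  have h1 : FHb k [true] = false := by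
    rw [← Bool.not_eq_true, FHb_single, stp]; simp; omega
  by_cases hk1 : k = 1
  · have h2 : FHb k [false] = true := by rw [FHb_single, stp]; simp; omega
    rw [h1, h2]
    simp [wt, hk1]
    cases p <;> simp
  · have h2 : FHb k [false] = false := by
      rw [← Bool.not_eq_true, FHb_single, stp]; simp; omega
    rw [h1, h2]; simp [hk1]

lemma Pn_succ {a : ℝ} (k : ℤ) (hk : 1 ≤ k) (p : Bool) (n : ℕ) :
    Pn a p k (n + 2) = (if p then a else 1 - a) * Pn a true (k + 1) (n + 1)
      + (if k = 1 then 0 else (if p then 1 - a else a) * Pn a false (k - 1) (n + 1)) := by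
  rw [Pn, ← Equiv.sum_comp (Fin.consEquiv fun _ : Fin (n+2) => Bool), Fintype.sum_prod_type]
  rw [Fintype.sum_bool]
  have hofFn : ∀ (x : Bool) (t : Fin (n+1) → Bool),
      List.ofFn ((Fin.consEquiv fun _ => Bool) (x, t)) = x :: List.ofFn t := by
    intro x t; simp [List.ofFn_succ, Fin.consEquiv]
  have hne : ∀ t : Fin (n+1) → Bool, List.ofFn t ≠ [] := by
    intro t h
    have := congrArg List.length h
    simp at this
  have htrue : ∀ t : Fin (n+1) → Bool,
      (if FHb k (true :: List.ofFn t) then wt a p (true :: List.ofFn t) else 0)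
        = (if p then a else 1 - a) *
            (if FHb (k+1) (List.ofFn t) then wt a true (List.ofFn t) else 0) := by
    intro t
    have hs : k + stp true = k + 1 := by simp [stp]
    by_cases h : FHb (k + 1) (List.ofFn t) = true
    · have : FHb k (true :: List.ofFn t) = true := by
        rw [FHb_cons _ _ _ (hne t), hs]; exact ⟨by omega, h⟩
      rw [if_pos this, if_pos h, wt]
      cases p <;> simp
    · have : ¬ FHb k (true :: List.ofFn t) = true := by
        rw [FHb_cons _ _ _ (hne t), hs]; tauto
      rw [if_neg this, if_neg h, mul_zero]
  have hfalse : ∀ t : Fin (n+1) → Bool,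
      (if FHb k (false :: List.ofFn t) then wt a p (false :: List.ofFn t) else 0)
        = (if k = 1 then 0 else (if p then 1 - a else a) *
            (if FHb (k-1) (List.ofFn t) then wt a false (List.ofFn t) else 0)) := by
    intro t
    have hs : k + stp false = k - 1 := by simp [stp]; ring
    by_cases hk1 : k = 1
    · have : ¬ FHb k (false :: List.ofFn t) = true := by
        rw [FHb_cons _ _ _ (hne t), hs, hk1]; simp
      rw [if_neg this, if_pos hk1]
    · by_cases h : FHb (k - 1) (List.ofFn t) = true
      · have : FHb k (false :: List.ofFn t) = true := by
          rw [FHb_cons _ _ _ (hne t), hs]; exact ⟨by omega, h⟩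
        rw [if_pos this, if_neg hk1, if_pos h, wt]
        cases p <;> simp
      · have : ¬ FHb k (false :: List.ofFn t) = true := by
          rw [FHb_cons _ _ _ (hne t), hs]; tauto
        rw [if_neg this, if_neg hk1, if_neg h, mul_zero]
  simp only [hofFn]
  rw [Finset.sum_congr rfl (fun t _ => htrue t), Finset.sum_congr rfl (fun t _ => hfalse t)]
  rw [← Finset.mul_sum]
  by_cases hk1 : k = 1
  · simp [hk1, Pn]
  · simp only [if_neg hk1]
    rw [← Finset.mul_sum, Pn, Pn]

lemma Afun_succ {a : ℝ} (k : ℤ) (hk : 1 ≤ k) (p : Bool) (N : ℕ) :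
    Afun a p k (N + 1) = (if p then a else 1 - a) * Afun a true (k + 1) N
      + (if p then 1 - a else a) * (if k = 1 then 1 else Afun a false (k - 1) N) := by
  rw [Afun, Finset.sum_range_succ']
  rw [Finset.sum_congr rfl (fun i _ => Pn_succ k hk p i), Pn_one k hk p]
  rw [Finset.sum_add_distrib, ← Finset.mul_sum]
  by_cases hk1 : k = 1
  · simp only [if_pos hk1, Finset.sum_const_zero, add_zero, mul_one]
    rw [Afun]
  · simp only [if_neg hk1, ← Finset.mul_sum]
    rw [Afun, Afun]
    ring

lemma Afun_nonneg {a : ℝ} (ha : 0 < a) (ha1 : a < 1) (p : Bool) (k : ℤ) (N : ℕ) :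
    0 ≤ Afun a p k N :=
  Finset.sum_nonneg fun n _ => Pn_nonneg ha ha1 p k (n + 1)

lemma Afun_mono {a : ℝ} (ha : 0 < a) (ha1 : a < 1) (p : Bool) (k : ℤ) :
    Monotone (Afun a p k) := by
  intro N M hNM
  refine Finset.sum_le_sum_of_subset_of_nonneg (Finset.range_subset_range.mpr hNM)
    (fun n _ _ => Pn_nonneg ha ha1 p k (n + 1))

lemma Afun_le_one {a : ℝ} (ha : 0 < a) (ha1 : a < 1) :
    ∀ (N : ℕ) (p : Bool) (k : ℤ), 1 ≤ k → Afun a p k N ≤ 1 := by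
  intro N
  induction N with
  | zero => intro p k _; simp [Afun]
  | succ N ih =>
    intro p k hk
    rw [Afun_succ k hk]
    have h1 : Afun a true (k+1) N ≤ 1 := ih true (k+1) (by omega)
    have h1' : 0 ≤ Afun a true (k+1) N := Afun_nonneg ha ha1 _ _ _
    have h2 : (if k = 1 then (1:ℝ) else Afun a false (k-1) N) ≤ 1 := by
      split
      · exact le_refl 1
      · exact ih false (k-1) (by omega)
    have h2' : (0:ℝ) ≤ (if k = 1 then (1:ℝ) else Afun a false (k-1) N) := by
      split
      · exact zero_le_one
      · exact Afun_nonneg ha ha1 _ _ _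
    cases p <;> simp only [Bool.false_eq_true, Bool.true_eq_false, if_true, if_false] <;> nlinarith

/-- The total absorption probability: supremum of `Afun` over all horizons. -/
noncomputable def Lfun (a : ℝ) (p : Bool) (k : ℤ) : ℝ := ⨆ N, Afun a p k N

lemma tendsto_Afun {a : ℝ} (ha : 0 < a) (ha1 : a < 1) (p : Bool) (k : ℤ) (hk : 1 ≤ k) :
    Filter.Tendsto (Afun a p k) Filter.atTop (nhds (Lfun a p k)) := by
  refine tendsto_atTop_ciSup (Afun_mono ha ha1 p k) ⟨1, ?_⟩
  rintro x ⟨N, rfl⟩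
  exact Afun_le_one ha ha1 N p k hk

lemma Lfun_nonneg {a : ℝ} (ha : 0 < a) (ha1 : a < 1) (p : Bool) (k : ℤ) (hk : 1 ≤ k) :
    0 ≤ Lfun a p k := by
  have : Afun a p k 0 ≤ Lfun a p k := by
    refine le_ciSup ⟨1, ?_⟩ 0
    rintro x ⟨N, rfl⟩
    exact Afun_le_one ha ha1 N p k hk
  simpa [Afun] using this

lemma Lfun_le_one {a : ℝ} (ha : 0 < a) (ha1 : a < 1) (p : Bool) (k : ℤ) (hk : 1 ≤ k) :
    Lfun a p k ≤ 1 :=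
  ciSup_le fun N => Afun_le_one ha ha1 N p k hk

lemma Lfun_eq {a : ℝ} (ha : 0 < a) (ha1 : a < 1) (p : Bool) (k : ℤ) (hk : 1 ≤ k) :
    Lfun a p k = (if p then a else 1 - a) * Lfun a true (k + 1)
      + (if p then 1 - a else a) * (if k = 1 then 1 else Lfun a false (k - 1)) := by
  have h1 : Filter.Tendsto (fun N => Afun a p k (N + 1)) Filter.atTop (nhds (Lfun a p k)) :=
    (tendsto_Afun ha ha1 p k hk).comp (Filter.tendsto_add_atTop_nat 1)
  have h2 : Filter.Tendsto (fun N => (if p then a else 1 - a) * Afun a true (k + 1) N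
      + (if p then 1 - a else a) * (if k = 1 then 1 else Afun a false (k - 1) N))
      Filter.atTop (nhds ((if p then a else 1 - a) * Lfun a true (k + 1)
        + (if p then 1 - a else a) * (if k = 1 then 1 else Lfun a false (k - 1)))) := by
    refine Filter.Tendsto.add ?_ ?_
    · exact (tendsto_Afun ha ha1 true (k+1) (by omega)).const_mul _
    · by_cases hk1 : k = 1
      · simp only [if_pos hk1]
        exact tendsto_const_nhds
      · simp only [if_neg hk1]
        exact (tendsto_Afun ha ha1 false (k-1) (by omega)).const_mul _
  have heq : (fun N => Afun a p k (N + 1)) = (fun N => (if p then a else 1 - a) * Afun a true (k + 1) N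
      + (if p then 1 - a else a) * (if k = 1 then 1 else Afun a false (k - 1) N)) := by
    funext N; exact Afun_succ k hk p N
  rw [heq] at h1
  exact tendsto_nhds_unique h1 h2

/-- Boundary-extended absorption probability (`= 1` at the boundary `k = 0`). -/
noncomputable def G (a : ℝ) (k : ℤ) : ℝ := if k = 0 then 1 else Lfun a false k

lemma e1 {a : ℝ} (ha : 0 < a) (ha1 : a < 1) (k : ℤ) (hk : 1 ≤ k) :
    G a k = a * G a (k - 1) + (1 - a) * Lfun a true (k + 1) := by
  have h := Lfun_eq ha ha1 false k hk
  simp only [Bool.false_eq_true, if_false] at h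
  rw [G, if_neg (by omega), h]
  by_cases hk1 : k = 1
  · rw [if_pos hk1, G, if_pos (by omega)]; ring
  · rw [if_neg hk1, G, if_neg (by omega)]; ring

lemma e2 {a : ℝ} (ha : 0 < a) (ha1 : a < 1) (k : ℤ) (hk : 1 ≤ k) :
    Lfun a true k = (1 - a) * G a (k - 1) + a * Lfun a true (k + 1) := by
  have h := Lfun_eq ha ha1 true k hk
  simp only [if_true] at h
  rw [h]
  by_cases hk1 : k = 1
  · rw [if_pos hk1, G, if_pos (by omega)]; ring
  · rw [if_neg hk1, G, if_neg (by omega)]; ring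

lemma Gkey {a : ℝ} (ha : 0 < a) (ha1 : a < 1) (k : ℤ) (hk : 2 ≤ k) :
    G a k + G a (k - 2) = 2 * G a (k - 1) := by
  have A1 := e1 ha ha1 k (by omega)
  have A2 := e1 ha ha1 (k - 1) (by omega)
  have A3 := e2 ha ha1 k (by omega)
  have h1 : k - 1 - 1 = k - 2 := by ring
  have h2 : k - 1 + 1 = k := by ring
  rw [h1, h2] at A2
  have hane : a ≠ 0 := ne_of_gt ha
  have key : a * (G a k + G a (k - 2)) = a * (2 * G a (k - 1)) := by
    linear_combination a * A1 - A2 - (1 - a) * A3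
  exact mul_left_cancel₀ hane key

lemma G_step {a : ℝ} (ha : 0 < a) (ha1 : a < 1) :
    ∀ m : ℕ, G a ((m : ℤ) + 1) = G a (m : ℤ) + (G a 1 - 1) := by
  intro m
  induction m with
  | zero =>
    have h0 : G a 0 = 1 := by rw [G, if_pos rfl]
    push_cast
    rw [h0]; ring
  | succ m ih =>
    have hkey := Gkey ha ha1 ((m : ℤ) + 2) (by omega)
    have h1 : (m : ℤ) + 2 - 2 = (m : ℤ) := by ring
    have h2 : (m : ℤ) + 2 - 1 = (m : ℤ) + 1 := by ring
    rw [h1, h2] at hkey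
    push_cast
    have : (m : ℤ) + 1 + 1 = (m : ℤ) + 2 := by ring
    rw [this]
    linarith [hkey, ih]

lemma G_affine {a : ℝ} (ha : 0 < a) (ha1 : a < 1) :
    ∀ m : ℕ, G a (m : ℤ) = 1 + (m : ℝ) * (G a 1 - 1) := by
  intro m
  induction m with
  | zero => simp [G]
  | succ m ih =>
    have := G_step ha ha1 m
    push_cast
    push_cast at this ih
    linarith

lemma G_nonneg {a : ℝ} (ha : 0 < a) (ha1 : a < 1) (m : ℕ) : 0 ≤ G a (m : ℤ) := by
  rcases Nat.eq_zero_or_pos m with h | h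
  · simp [h, G]
  · rw [G, if_neg (by omega)]
    exact Lfun_nonneg ha ha1 false (m : ℤ) (by omega)

lemma d_zero {a : ℝ} (ha : 0 < a) (ha1 : a < 1) : G a 1 = 1 := by
  have hle : G a 1 ≤ 1 := by
    rw [G, if_neg (by omega)]
    exact Lfun_le_one ha ha1 false 1 (by omega)
  rcases eq_or_lt_of_le hle with h | h
  · exact h
  · exfalso
    set d : ℝ := G a 1 - 1 with hd
    have hdneg : d < 0 := by simp [hd]; linarith
    obtain ⟨n, hn⟩ := exists_nat_gt (1 / (-d))
    have hnd : 1 < (n : ℝ) * (-d) := by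
      rw [div_lt_iff₀ (by linarith)] at hn
      linarith
    have h1 : G a (n : ℤ) = 1 + (n : ℝ) * d := G_affine ha ha1 n
    have h2 : 0 ≤ G a (n : ℤ) := G_nonneg ha ha1 n
    nlinarith

lemma Lfun_false_eq_one {a : ℝ} (ha : 0 < a) (ha1 : a < 1) (k : ℤ) (hk : 1 ≤ k) :
    Lfun a false k = 1 := by
  have h1 : G a k = 1 := by
    have h2 := G_affine ha ha1 k.toNat
    rw [Int.toNat_of_nonneg (by omega)] at h2
    rw [h2, d_zero ha ha1]
    ring
  rwa [G, if_neg (by omega)] at h1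

lemma Lfun_true_eq_one {a : ℝ} (ha : 0 < a) (ha1 : a < 1) (k : ℤ) (hk : 1 ≤ k) :
    Lfun a true k = 1 := by
  have hT2 : ∀ j : ℤ, 2 ≤ j → Lfun a true j = 1 := by
    intro j hj
    have hA := e1 ha ha1 (j - 1) (by omega)
    have hg1 : G a (j - 1) = 1 := by
      rw [G, if_neg (by omega)]
      exact Lfun_false_eq_one ha ha1 _ (by omega)
    have hg2 : G a (j - 1 - 1) = 1 := by
      by_cases h : j = 2
      · rw [G, if_pos (by omega)]
      · rw [G, if_neg (by omega)]
        exact Lfun_false_eq_one ha ha1 _ (by omega)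
    have h3 : j - 1 + 1 = j := by ring
    rw [hg1, hg2, h3] at hA
    have : (1 - a) * Lfun a true j = (1 - a) * 1 := by linarith
    exact mul_left_cancel₀ (by linarith) this
  rcases eq_or_lt_of_le hk with h | h
  · have hA := e2 ha ha1 1 le_rfl
    have hg : G a (1 - 1) = 1 := by norm_num [G]
    have h2 : Lfun a true (1 + 1) = 1 := hT2 2 le_rfl
    rw [hg, h2] at hA
    rw [← h]
    rw [hA]; ring
  · exact hT2 k (by omega)

end AbsorptionAux

/-- Proposition 10: for `a = d ∈ (0,1)` (so `b = c = 1 − a`), the total absorption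
probability at `0` on the half line equals one:
`P^{(∞)}_k(φ) = Σ_{n=1}^∞ (1,1)·Ξ^{(∞)}_k(n)·(α,β)ᵀ = 1` for every `k ≥ 1` and every
initial distribution `φ = (α, β)`. -/
theorem absorption_halfline (a : ℝ) (ha : 0 < a) (ha1 : a < 1)
    (k : ℤ) (hk : 1 ≤ k) (α β : ℝ) (hα : 0 ≤ α) (hβ : 0 ≤ β) (hαβ : α + β = 1) :
    ∑' n : ℕ, entryPair (XiInf (Pmat a (1 - a)) (Qmat (1 - a) a) k (n + 1)) α β = 1 := by
  have hf : ∀ n : ℕ, entryPair (XiInf (Pmat a (1 - a)) (Qmat (1 - a) a) k (n + 1)) α β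
      = α * AbsorptionAux.Pn a false k (n + 1) + β * AbsorptionAux.Pn a true k (n + 1) :=
    fun n => AbsorptionAux.entryPair_XiInf a k n α β
  have hnn : ∀ n : ℕ,
      0 ≤ entryPair (XiInf (Pmat a (1 - a)) (Qmat (1 - a) a) k (n + 1)) α β := by
    intro n
    rw [hf n]
    exact add_nonneg (mul_nonneg hα (AbsorptionAux.Pn_nonneg ha ha1 false k (n + 1)))
      (mul_nonneg hβ (AbsorptionAux.Pn_nonneg ha ha1 true k (n + 1)))
  have hpart : ∀ N : ℕ,
      ∑ i ∈ Finset.range N, entryPair (XiInf (Pmat a (1 - a)) (Qmat (1 - a) a) k (i + 1)) α β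
        = α * AbsorptionAux.Afun a false k N + β * AbsorptionAux.Afun a true k N := by
    intro N
    rw [Finset.sum_congr rfl fun i _ => hf i, Finset.sum_add_distrib,
      ← Finset.mul_sum, ← Finset.mul_sum]
    rfl
  have htend : Filter.Tendsto
      (fun N : ℕ => ∑ i ∈ Finset.range N,
        entryPair (XiInf (Pmat a (1 - a)) (Qmat (1 - a) a) k (i + 1)) α β)
      Filter.atTop (nhds 1) := by
    have h1 := (AbsorptionAux.tendsto_Afun ha ha1 false k hk).const_mul α
    have h2 := (AbsorptionAux.tendsto_Afun ha ha1 true k hk).const_mul β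
    have h3 := h1.add h2
    rw [AbsorptionAux.Lfun_false_eq_one ha ha1 k hk,
      AbsorptionAux.Lfun_true_eq_one ha ha1 k hk] at h3
    have h4 : α * 1 + β * 1 = 1 := by linarith
    rw [h4] at h3
    exact Filter.Tendsto.congr (fun N => (hpart N).symm) h3
  exact ((hasSum_iff_tendsto_nat_of_nonneg hnn 1).mpr htend).tsum_eq
end

section
/- Assume a = d ∈ (0,1) (so b = c = 1 − a). Then for every integer N ≥ 2, every integer k with 1 ≤ k ≤ N − 1, and every initial distribution φ = (α, β), the probability P^{(N)}_k(φ) = Σ_{n=1}^{∞} (1,1)·Ξ^{(N)}_k(n)·(α,β)ᵀ of absorption at 0 before reaching N equals ((1 − a)(N − k) + (2a − 1)α) / ((1 − a)N + 2a − 1). -/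
open scoped BigOperators

/-- `XiN Pm Qm N k n = Ξ^{(N)}_k(n)`: the sum, over all step sequences
`(s₁, …, sₙ) ∈ {−1,+1}ⁿ` whose partial positions `k_j = k + s₁ + ⋯ + s_j` satisfy
`0 < k_j < N` for `1 ≤ j ≤ n−1` and `k_n = 0`, of the matrix product `M_{sₙ} ⋯ M_{s₁}`
where `M_{−1} = Pm` and `M_{+1} = Qm`. -/
noncomputable def XiN (Pm Qm : Matrix (Fin 2) (Fin 2) ℝ) (N : ℤ) (k : ℤ) (n : ℕ) :
    Matrix (Fin 2) (Fin 2) ℝ :=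
  ∑ s ∈ Finset.univ.filter (fun s : Fin n → Bool =>
      (∀ j : Fin n, (j : ℕ) < n - 1 → 0 < walkPos k s j ∧ walkPos k s j < N) ∧
      (∀ j : Fin n, (j : ℕ) = n - 1 → walkPos k s j = 0)),
    ((List.ofFn (fun i => if s i then Qm else Pm)).reverse).prod

/-!
Splitting off the first step gives `Ξ_k(n+2) = Ξ_{k-1}(n+1) P + Ξ_{k+1}(n+1) Q`, each term
present only when the new position lies in `(0, N)`. Since `P` and `Q` each have a single
nonzero row, `(1,1) M P (α,β)ᵀ = (aα + bβ) · (1,1) M (1,0)ᵀ`, and likewise for `Q` with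
`(0,1)ᵀ`. The partial sums of the hitting probabilities are bounded by `α + β`, so the
absorption probabilities `X_k = P_k((1,0))` and `Y_k = P_k((0,1))` exist and, with `X_0 = 1`,
`Y_N = 0` and `a = d`, solve
`X_k = a X_{k-1} + (1-a) Y_{k+1}`, `Y_k = (1-a) X_{k-1} + a Y_{k+1}`.
In this system `X_{k-1} - Y_k` does not depend on `k`, so `X` is affine in `k`, and the two
boundary conditions determine it.
-/
open Finset

def IsFirstHitPath (N k : ℤ) {n : ℕ} (s : Fin n → Bool) : Prop :=
  (∀ j : Fin n, (j : ℕ) < n - 1 → 0 < walkPos k s j ∧ walkPos k s j < N) ∧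
  (∀ j : Fin n, (j : ℕ) = n - 1 → walkPos k s j = 0)

instance (N k : ℤ) (n : ℕ) : DecidablePred (IsFirstHitPath N k (n := n)) := fun _ => by
  unfold IsFirstHitPath; infer_instance

def pathProd {M : Type*} [Monoid M] (p q : M) {n : ℕ} (s : Fin n → Bool) : M :=
  ((List.ofFn fun i => if s i then q else p).reverse).prod

lemma pathProd_cons {M : Type*} [Monoid M] (p q : M) {n : ℕ} (b : Bool) (t : Fin n → Bool) :
    pathProd p q (Fin.cons b t : Fin (n + 1) → Bool) = pathProd p q t * if b then q else p := by
  simp [pathProd, List.ofFn_succ]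

lemma walkPos_cons_zero (k : ℤ) {n : ℕ} (b : Bool) (t : Fin n → Bool) :
    walkPos k (Fin.cons b t : Fin (n + 1) → Bool) 0 = k + if b then 1 else -1 := by
  simp [walkPos, filter_eq']

lemma walkPos_cons_succ (k : ℤ) {n : ℕ} (b : Bool) (t : Fin n → Bool) (i : Fin n) :
    walkPos k (Fin.cons b t : Fin (n + 1) → Bool) i.succ =
      walkPos (k + if b then 1 else -1) t i := by
  simp only [walkPos, sum_filter, Fin.sum_univ_succ, Fin.cons_zero, Fin.cons_succ,
    Fin.succ_le_succ_iff, Fin.zero_le, if_true]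
  ring

lemma isFirstHitPath_cons_zero_iff (N k : ℤ) (b : Bool) (t : Fin 0 → Bool) :
    IsFirstHitPath N k (Fin.cons b t : Fin 1 → Bool) ↔ (k + if b then 1 else -1) = 0 := by
  simp [IsFirstHitPath, Fin.forall_fin_one, walkPos_cons_zero]

lemma isFirstHitPath_cons_iff (N k : ℤ) {n : ℕ} (b : Bool) (t : Fin (n + 1) → Bool) :
    IsFirstHitPath N k (Fin.cons b t : Fin (n + 2) → Bool) ↔
      (0 < (k + if b then 1 else -1) ∧ (k + if b then 1 else -1) < N) ∧
        IsFirstHitPath N (k + if b then 1 else -1) t := by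
  simp only [IsFirstHitPath, Fin.forall_fin_succ (n := n + 1), walkPos_cons_zero,
    walkPos_cons_succ, Fin.val_zero, Fin.val_succ]
  constructor
  · rintro ⟨⟨h0, h⟩, -, h'⟩
    exact ⟨h0 (by omega), fun j hj => h j (by omega), fun j hj => h' j (by omega)⟩
  · rintro ⟨h0, h, h'⟩
    exact ⟨⟨fun _ => h0, fun j hj => h j (by omega)⟩, by omega, fun j hj => h' j (by omega)⟩

lemma XiN_eq_sum (Pm Qm : Matrix (Fin 2) (Fin 2) ℝ) (N k : ℤ) (n : ℕ) :
    XiN Pm Qm N k n =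
      ∑ s : Fin n → Bool, if IsFirstHitPath N k s then pathProd Pm Qm s else 0 := by
  rw [XiN, sum_filter]
  rfl

lemma XiN_succ_eq_sum (Pm Qm : Matrix (Fin 2) (Fin 2) ℝ) (N k : ℤ) (n : ℕ) :
    XiN Pm Qm N k (n + 1) = ∑ b : Bool, ∑ t : Fin n → Bool,
      if IsFirstHitPath N k (Fin.cons b t : Fin (n + 1) → Bool) then
        pathProd Pm Qm t * (if b then Qm else Pm) else 0 := by
  rw [XiN_eq_sum, ← (Fin.consEquiv fun _ => Bool).sum_comp, Fintype.sum_prod_type]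
  simp_rw [← pathProd_cons]
  rfl

lemma XiN_one (Pm Qm : Matrix (Fin 2) (Fin 2) ℝ) (N k : ℤ) :
    XiN Pm Qm N k 1 = (if k = 1 then Pm else 0) + (if k = -1 then Qm else 0) := by
  simp [XiN_succ_eq_sum, isFirstHitPath_cons_zero_iff, pathProd, add_comm,
    add_eq_zero_iff_eq_neg]

lemma XiN_succ_succ (Pm Qm : Matrix (Fin 2) (Fin 2) ℝ) (N k : ℤ) (n : ℕ) :
    XiN Pm Qm N k (n + 2) =
      (if 0 < k - 1 ∧ k - 1 < N then XiN Pm Qm N (k - 1) (n + 1) else 0) * Pm +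
      (if 0 < k + 1 ∧ k + 1 < N then XiN Pm Qm N (k + 1) (n + 1) else 0) * Qm := by
  rw [XiN_succ_eq_sum, Fintype.sum_bool, add_comm]
  simp only [isFirstHitPath_cons_iff, ite_and, Bool.false_eq_true, if_false, if_true,
    ← sub_eq_add_neg]
  congr 1 <;> split_ifs <;> simp [XiN_eq_sum, sum_mul, ite_mul]

noncomputable def firstHitProb (a d : ℝ) (N k : ℤ) (n : ℕ) (α β : ℝ) : ℝ :=
  entryPair (XiN (Pmat a (1 - d)) (Qmat (1 - a) d) N k n) α β

noncomputable def absorptionProb (a d : ℝ) (N k : ℤ) (α β : ℝ) : ℝ :=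
  ∑' n, firstHitProb a d N k (n + 1) α β

section FirstHitProb

variable {a d : ℝ} {N : ℤ}

lemma firstHitProb_eq_add (k : ℤ) (n : ℕ) (α β : ℝ) :
    firstHitProb a d N k n α β =
      α * firstHitProb a d N k n 1 0 + β * firstHitProb a d N k n 0 1 := by
  simp only [firstHitProb, entryPair]
  ring

lemma firstHitProb_one (k : ℤ) (α β : ℝ) :
    firstHitProb a d N k 1 α β =
      (if k = 1 then a * α + (1 - d) * β else 0) +
        (if k = -1 then (1 - a) * α + d * β else 0) := by
  rw [firstHitProb, XiN_one]
  split_ifs <;> first | omega | simp [entryPair, Pmat, Qmat]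

lemma firstHitProb_succ_succ (k : ℤ) (n : ℕ) (α β : ℝ) :
    firstHitProb a d N k (n + 2) α β =
      (a * α + (1 - d) * β) *
          (if 0 < k - 1 ∧ k - 1 < N then firstHitProb a d N (k - 1) (n + 1) 1 0 else 0) +
        ((1 - a) * α + d * β) *
          (if 0 < k + 1 ∧ k + 1 < N then firstHitProb a d N (k + 1) (n + 1) 0 1 else 0) := by
  rw [firstHitProb, XiN_succ_succ]
  split_ifs <;>
    simp [firstHitProb, entryPair, Pmat, Qmat, Matrix.mul_apply, Fin.sum_univ_two] <;> ring

lemma firstHitProb_nonneg (ha : 0 ≤ a) (ha1 : a ≤ 1) (hd : 0 ≤ d) (hd1 : d ≤ 1)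
    (n : ℕ) (k : ℤ) {α β : ℝ} (hα : 0 ≤ α) (hβ : 0 ≤ β) :
    0 ≤ firstHitProb a d N k (n + 1) α β := by
  have hP : 0 ≤ a * α + (1 - d) * β := by nlinarith
  have hQ : 0 ≤ (1 - a) * α + d * β := by nlinarith
  induction n generalizing k α β with
  | zero =>
    rw [firstHitProb_one]
    positivity
  | succ n ih =>
    have := ih (k - 1) zero_le_one le_rfl (by linarith) (by linarith)
    have := ih (k + 1) le_rfl zero_le_one (by linarith) (by linarith)
    rw [firstHitProb_succ_succ]
    positivity

lemma sum_range_firstHitProb_le (ha : 0 ≤ a) (ha1 : a ≤ 1) (hd : 0 ≤ d) (hd1 : d ≤ 1)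
    (m : ℕ) (k : ℤ) {α β : ℝ} (hα : 0 ≤ α) (hβ : 0 ≤ β) :
    ∑ n ∈ range m, firstHitProb a d N k (n + 1) α β ≤ α + β := by
  have hP : 0 ≤ a * α + (1 - d) * β := by nlinarith
  have hQ : 0 ≤ (1 - a) * α + d * β := by nlinarith
  induction m generalizing k α β with
  | zero => simpa using add_nonneg hα hβ
  | succ m ih =>
    have := ih (k - 1) zero_le_one le_rfl (by linarith) (by linarith)
    have := ih (k + 1) le_rfl zero_le_one (by linarith) (by linarith)
    rw [sum_range_succ', firstHitProb_one]
    simp only [firstHitProb_succ_succ, sum_add_distrib, ← mul_sum, sum_ite_irrel,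
      sum_const_zero]
    -- the weights of `P` and `Q` add up to `α + β`, and `k = 1` excludes `0 < k - 1`
    split_ifs <;> first | omega | nlinarith

lemma summable_firstHitProb (ha : 0 ≤ a) (ha1 : a ≤ 1) (hd : 0 ≤ d) (hd1 : d ≤ 1)
    (k : ℤ) (α β : ℝ) : Summable fun n => firstHitProb a d N k (n + 1) α β := by
  have hsummable : ∀ {α β : ℝ}, 0 ≤ α → 0 ≤ β →
      Summable fun n => firstHitProb a d N k (n + 1) α β := fun hα hβ =>
    summable_of_sum_range_le (firstHitProb_nonneg ha ha1 hd hd1 · k hα hβ)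
      (sum_range_firstHitProb_le ha ha1 hd hd1 · k hα hβ)
  simp_rw [firstHitProb_eq_add _ _ α β]
  exact ((hsummable zero_le_one le_rfl).mul_left α).add ((hsummable le_rfl zero_le_one).mul_left β)

/-- First-step analysis; the `if`s are the boundary values `X_0 = 1` and `Y_N = 0`. -/
lemma absorptionProb_eq (ha : 0 ≤ a) (ha1 : a ≤ 1) (hd : 0 ≤ d) (hd1 : d ≤ 1)
    {k : ℤ} (hk : 0 < k) (hkN : k < N) (α β : ℝ) :
    absorptionProb a d N k α β =
      (a * α + (1 - d) * β) * (if k - 1 = 0 then 1 else absorptionProb a d N (k - 1) 1 0) +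
        ((1 - a) * α + d * β) * (if k + 1 = N then 0 else absorptionProb a d N (k + 1) 0 1) := by
  rw [absorptionProb, (summable_firstHitProb ha ha1 hd hd1 k α β).tsum_eq_zero_add, zero_add,
    firstHitProb_one]
  simp only [firstHitProb_succ_succ]
  have hprev : (0 < k - 1 ∧ k - 1 < N) ↔ ¬ k - 1 = 0 := by omega
  have hnext : (0 < k + 1 ∧ k + 1 < N) ↔ ¬ k + 1 = N := by omega
  have hk1 : k = 1 ↔ k - 1 = 0 := by omega
  have hk1' : k ≠ -1 := by omega
  simp only [hprev, hnext, hk1, hk1', if_false, add_zero]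
  by_cases h1 : k - 1 = 0 <;> by_cases h2 : k + 1 = N <;>
    simp [h1, h2, absorptionProb, tsum_mul_left, Summable.tsum_add,
      summable_firstHitProb ha ha1 hd hd1, Summable.mul_left]

end FirstHitProb

section Recurrence

variable {a : ℝ} {N : ℤ} {x y : ℤ → ℝ}

lemma sub_eq_sub_of_recurrence
    (hx : ∀ k, 0 < k → k < N → x k = a * x (k - 1) + (1 - a) * y (k + 1))
    (hy : ∀ k, 0 < k → k < N → y k = (1 - a) * x (k - 1) + a * y (k + 1))
    (j : ℤ) (hj : 1 ≤ j) (hjN : j ≤ N) : x (j - 1) - y j = x 0 - y 1 := by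
  induction j, hj using Int.leInduction with
  | base => simp
  | succ j hj ih =>
    rw [add_sub_cancel_right]
    -- the sum of the two recurrences is `x j + y j = x (j - 1) + y (j + 1)`
    linear_combination hx j (by omega) (by omega) + hy j (by omega) (by omega) + ih (by omega)

lemma mul_eq_of_recurrence
    (hx : ∀ k, 0 < k → k < N → x k = a * x (k - 1) + (1 - a) * y (k + 1))
    (hy : ∀ k, 0 < k → k < N → y k = (1 - a) * x (k - 1) + a * y (k + 1))
    (j : ℤ) (hj : 0 ≤ j) (hjN : j < N) : a * x j = a * x 0 - (1 - a) * j * (x 0 - y 1) := by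
  induction j, hj using Int.leInduction with
  | base => simp
  | succ j hj ih =>
    have hxj := hx (j + 1) (by omega) hjN
    have hsub := sub_eq_sub_of_recurrence hx hy (j + 1 + 1) (by omega) (by omega)
    rw [add_sub_cancel_right] at hxj hsub
    push_cast
    linear_combination hxj + ih (by omega) - (1 - a) * hsub

lemma recurrence_solution (ha : 0 < a) (ha1 : a ≤ 1) (hx0 : x 0 = 1) (hyN : y N = 0)
    (hx : ∀ k, 0 < k → k < N → x k = a * x (k - 1) + (1 - a) * y (k + 1))
    (hy : ∀ k, 0 < k → k < N → y k = (1 - a) * x (k - 1) + a * y (k + 1)) :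
    (∀ j, 0 ≤ j → j < N →
      x j = ((1 - a) * (N - j) + 2 * a - 1) / ((1 - a) * N + 2 * a - 1)) ∧
      ∀ j, 0 < j → j ≤ N → y j = (1 - a) * (N - j) / ((1 - a) * N + 2 * a - 1) := by
  set D := (1 - a) * (N : ℝ) + 2 * a - 1 with hD_def
  have hD (hN : 1 ≤ N) : D ≠ 0 := by
    have : (1 : ℝ) ≤ N := by exact_mod_cast hN
    nlinarith
  have hδ (hN : 1 ≤ N) : x 0 - y 1 = a / D := by
    have hxN := sub_eq_sub_of_recurrence hx hy N hN le_rfl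
    have hlinN := mul_eq_of_recurrence hx hy (N - 1) (by omega) (by omega)
    rw [hyN, sub_zero, hx0] at hxN
    rw [hx0] at hlinN ⊢
    push_cast at hlinN
    rw [eq_div_iff (hD hN)]
    linear_combination hlinN - a * hxN + (1 - y 1) * hD_def
  have hxj (j : ℤ) (hj : 0 ≤ j) (hjN : j < N) : x j = ((1 - a) * (N - j) + 2 * a - 1) / D := by
    have hD := hD (by omega)
    apply mul_left_cancel₀ ha.ne'
    rw [mul_eq_of_recurrence hx hy j hj hjN, hδ (by omega), hx0]
    field_simp
    linear_combination hD_def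
  refine ⟨hxj, fun j hj hjN => ?_⟩
  have hyj := sub_eq_sub_of_recurrence hx hy j hj hjN
  rw [hxj (j - 1) (by omega) (by omega), hδ (by omega)] at hyj
  push_cast at hyj
  linear_combination -hyj

end Recurrence

theorem absorption_two_boundaries_general (a : ℝ) (ha : 0 < a) (ha1 : a < 1)
    (N k : ℤ) (hk : 1 ≤ k) (hkN : k ≤ N - 1)
    (α β : ℝ) (hαβ : α + β = 1) :
    ∑' n : ℕ, entryPair (XiN (Pmat a (1 - a)) (Qmat (1 - a) a) N k (n + 1)) α β =
      ((1 - a) * ((N : ℝ) - (k : ℝ)) + (2 * a - 1) * α) /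
        ((1 - a) * (N : ℝ) + 2 * a - 1) := by
  have hrec {j : ℤ} (hj : 0 < j) (hjN : j < N) :=
    absorptionProb_eq ha.le ha1.le ha.le ha1.le hj hjN
  obtain ⟨hx, hy⟩ := recurrence_solution ha ha1.le (N := N)
    (x := fun j => if j = 0 then 1 else absorptionProb a a N j 1 0)
    (y := fun j => if j = N then 0 else absorptionProb a a N j 0 1) (by simp) (by simp)
    (fun j hj hjN => by simp [hj.ne', hrec hj hjN])
    (fun j hj hjN => by simp [hjN.ne, hrec hj hjN])
  have hxk := hx (k - 1) (by omega) (by omega)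
  have hyk := hy (k + 1) (by omega) (by omega)
  change absorptionProb a a N k α β = _
  obtain rfl : β = 1 - α := by linarith
  rw [hrec (by omega) (by omega), hxk, hyk]
  push_cast
  ring

/-- Theorem 11: for `a = d ∈ (0,1)` (so `b = c = 1 − a`), the probability
`P^{(N)}_k(φ) = Σ_{n=1}^∞ (1,1)·Ξ^{(N)}_k(n)·(α,β)ᵀ` of absorption at `0` before reaching
`N` equals `((1−a)(N−k) + (2a−1)α)/((1−a)N + 2a − 1)` for every `N ≥ 2`, `1 ≤ k ≤ N−1`
and every initial distribution `φ = (α, β)`. -/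
theorem absorption_two_boundaries (a : ℝ) (ha : 0 < a) (ha1 : a < 1)
    (N k : ℤ) (hN : 2 ≤ N) (hk : 1 ≤ k) (hkN : k ≤ N - 1)
    (α β : ℝ) (hα : 0 ≤ α) (hβ : 0 ≤ β) (hαβ : α + β = 1) :
    ∑' n : ℕ, entryPair (XiN (Pmat a (1 - a)) (Qmat (1 - a) a) N k (n + 1)) α β =
      ((1 - a) * ((N : ℝ) - (k : ℝ)) + (2 * a - 1) * α) /
        ((1 - a) * (N : ℝ) + 2 * a - 1) :=
  absorption_two_boundaries_general a ha ha1 N k hk hkN α β hαβ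
end
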